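/- Let φ_E be a d × d nonnegative kernel with zero E^c columns and associated branching matrix α (entrywise L¹ norms). If ρ(α^{EE}) < 1, then the entrywise L¹ norms of Σ_{n=1}^∞ φ_E^{⊗n} are bounded above, entrywise, by the block matrix Ω = [[(I - α^{EE})⁻¹ - I, 0], [α^{E^cE}(I - α^{EE})⁻¹, 0]]. -/

import Mathlib

open MeasureTheory Matrix Filter

noncomputable def L1norm (f : ℝ → ℝ) : ℝ := ∫ t in Set.Ioi (0:ℝ), |f t|

noncomputable def conv (f g : ℝ → ℝ) : ℝ → ℝ := fun t => ∫ s in (0:ℝ)..t, f (t - s) * g s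

noncomputable def mconv {ι κ σ : Type*} [Fintype κ] (φ : Matrix ι κ (ℝ → ℝ))
    (ψ : Matrix κ σ (ℝ → ℝ)) : Matrix ι σ (ℝ → ℝ) :=
  Matrix.of fun i j t => ∑ k, ∫ s in (0:ℝ)..t, φ i k (t - s) * ψ k j s

noncomputable def mconvPow {ι : Type*} [Fintype ι] (φ : Matrix ι ι (ℝ → ℝ)) : ℕ → Matrix ι ι (ℝ → ℝ)
  | 0 => φ
  | n + 1 => mconv φ (mconvPow φ n)

noncomputable def specRad {ι : Type*} [Fintype ι] [DecidableEq ι] (A : Matrix ι ι ℝ) : ℝ :=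
  sSup ((fun z : ℂ => ‖z‖) '' spectrum ℂ (A.map Complex.ofReal))

noncomputable def specRadC {ι : Type*} [Fintype ι] [DecidableEq ι] (A : Matrix ι ι ℂ) : ℝ :=
  sSup ((fun z : ℂ => ‖z‖) '' spectrum ℂ A)

/-!
For kernels on `(0, ∞)`, Tonelli and translation invariance give Young's inequality
`‖a ⋆ b‖₁ ≤ ‖a‖₁ ‖b‖₁`, so by induction the entrywise L¹ norms of `φ_E^{⊗(n+1)}` are dominated by
`β^(n+1)`, where `β = [[α^{EE}, 0], [α^{E^cE}, 0]]` is the matrix of L¹ norms of `φ_E`.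
Since `β^(n+1) = [[(α^{EE})^(n+1), 0], [α^{E^cE} (α^{EE})^n, 0]]`, and `ρ(α^{EE}) < 1` makes the
Neumann series `∑ (α^{EE})^n` converge to `(I - α^{EE})⁻¹` by Gelfand's formula, summing over `n`
gives `Ω`.
-/

open Set Function
open scoped ENNReal

theorem lintegral_lconvolution {G : Type*} [MeasurableSpace G] [AddGroup G] [MeasurableAdd₂ G]
    [MeasurableNeg G] {μ : Measure G} [μ.IsAddLeftInvariant] [SFinite μ] {f g : G → ℝ≥0∞}
    (hf : Measurable f) (hg : Measurable g) :
    ∫⁻ x, (f ⋆ₗ[μ] g) x ∂μ = (∫⁻ x, f x ∂μ) * ∫⁻ x, g x ∂μ := by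
  have (y : G) : ∫⁻ x, f y * g (-y + x) ∂μ = f y * ∫⁻ x, g x ∂μ := by
    rw [lintegral_const_mul _ (by fun_prop), lintegral_add_left_eq_self]
  simp_rw [lconvolution_def]
  rw [lintegral_lintegral_swap (by fun_prop)]
  simp_rw [this]
  exact lintegral_mul_const _ hf

-- The indicators cut the convolution over `ℝ` down to the causal one over `s ∈ (0, t]`.
theorem enorm_intervalIntegral_le_lconvolution (a b : ℝ → ℝ) {t : ℝ} (ht : 0 ≤ t) :
    ‖∫ s in 0..t, a (t - s) * b s‖ₑ ≤
      ((Ioi 0).indicator (‖b ·‖ₑ) ⋆ₗ (Ici 0).indicator (‖a ·‖ₑ)) t := by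
  rw [intervalIntegral.integral_of_le ht, lconvolution_def]
  refine (enorm_integral_le_lintegral_enorm _).trans_eq ?_
  rw [← lintegral_indicator measurableSet_Ioc]
  refine lintegral_congr fun s => ?_
  by_cases hs : 0 < s <;> by_cases hst : s ≤ t <;>
    simp [hs, hst, enorm_mul, neg_add_eq_sub, mul_comm]

theorem lintegral_Ioi_enorm_intervalIntegral_le {a b : ℝ → ℝ} (ha : Measurable a)
    (hb : Measurable b) :
    ∫⁻ t in Ioi 0, ‖∫ s in 0..t, a (t - s) * b s‖ₑ ≤
      (∫⁻ t in Ioi 0, ‖a t‖ₑ) * ∫⁻ t in Ioi 0, ‖b t‖ₑ :=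
  calc ∫⁻ t in Ioi 0, ‖∫ s in 0..t, a (t - s) * b s‖ₑ
      ≤ ∫⁻ t in Ioi 0, ((Ioi 0).indicator (‖b ·‖ₑ) ⋆ₗ (Ici 0).indicator (‖a ·‖ₑ)) t :=
        setLIntegral_mono' measurableSet_Ioi fun t ht =>
          enorm_intervalIntegral_le_lconvolution a b (le_of_lt ht)
    _ ≤ ∫⁻ t, ((Ioi 0).indicator (‖b ·‖ₑ) ⋆ₗ (Ici 0).indicator (‖a ·‖ₑ)) t :=
        setLIntegral_le_lintegral _ _
    _ = _ := by
        rw [lintegral_lconvolution (hb.enorm.indicator measurableSet_Ioi)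
            (ha.enorm.indicator measurableSet_Ici), lintegral_indicator measurableSet_Ioi,
          lintegral_indicator measurableSet_Ici, setLIntegral_congr Ioi_ae_eq_Ici.symm, mul_comm]

theorem measurable_intervalIntegral {g : ℝ → ℝ → ℝ} (hg : Measurable (uncurry g)) (a : ℝ) :
    Measurable fun t => ∫ s in a..t, g t s := by
  have hslice {S : ℝ → Set ℝ} (hS : MeasurableSet {p : ℝ × ℝ | p.2 ∈ S p.1}) :
      Measurable fun t => ∫ s in S t, g t s := by
    have (t : ℝ) :
        ∫ s in S t, g t s = ∫ s, {p : ℝ × ℝ | p.2 ∈ S p.1}.indicator (uncurry g) (t, s) := by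
      have hSt : MeasurableSet (S t) := measurable_prodMk_left hS
      rw [← integral_indicator hSt]
      rfl
    simp_rw [this]
    exact ((hg.indicator hS).stronglyMeasurable.integral_prod_right').measurable
  exact (hslice (S := Ioc a) ((measurableSet_lt measurable_const measurable_snd).inter
    (measurableSet_le measurable_snd measurable_fst))).sub
    (hslice (S := (Ioc · a)) ((measurableSet_lt measurable_fst measurable_snd).inter
      (measurableSet_le measurable_snd measurable_const)))

theorem measurable_intervalIntegral_sub_mul {a b : ℝ → ℝ} (ha : Measurable a) (hb : Measurable b) :
    Measurable fun t => ∫ s in 0..t, a (t - s) * b s :=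
  measurable_intervalIntegral (g := fun t s => a (t - s) * b s)
    ((ha.comp measurable_sub).mul (hb.comp measurable_snd)) 0

section MatrixConvolution

variable {ι κ σ : Type*} [Fintype κ] {φ : Matrix ι κ (ℝ → ℝ)} {ψ : Matrix κ σ (ℝ → ℝ)}

theorem measurable_mconv_apply (hφ : ∀ i k, Measurable (φ i k)) (hψ : ∀ k j, Measurable (ψ k j))
    (i : ι) (j : σ) : Measurable (mconv φ ψ i j) :=
  Finset.measurable_sum _ fun k _ => measurable_intervalIntegral_sub_mul (hφ i k) (hψ k j)

theorem lintegral_Ioi_enorm_mconv_apply_le (hφ : ∀ i k, Measurable (φ i k))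
    (hψ : ∀ k j, Measurable (ψ k j)) (i : ι) (j : σ) :
    ∫⁻ t in Ioi 0, ‖mconv φ ψ i j t‖ₑ ≤
      ∑ k, (∫⁻ t in Ioi 0, ‖φ i k t‖ₑ) * ∫⁻ t in Ioi 0, ‖ψ k j t‖ₑ :=
  calc ∫⁻ t in Ioi 0, ‖mconv φ ψ i j t‖ₑ
      ≤ ∫⁻ t in Ioi 0, ∑ k, ‖∫ s in 0..t, φ i k (t - s) * ψ k j s‖ₑ :=
        lintegral_mono fun _ => enorm_sum_le _ _
    _ = ∑ k, ∫⁻ t in Ioi 0, ‖∫ s in 0..t, φ i k (t - s) * ψ k j s‖ₑ :=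
        lintegral_finsetSum _ fun k _ =>
          (measurable_intervalIntegral_sub_mul (hφ i k) (hψ k j)).enorm
    _ ≤ _ := Finset.sum_le_sum fun k _ =>
        lintegral_Ioi_enorm_intervalIntegral_le (hφ i k) (hψ k j)

end MatrixConvolution

theorem L1norm_eq_toReal_lintegral_enorm {f : ℝ → ℝ}
    (hf : AEStronglyMeasurable f (volume.restrict (Ioi 0))) :
    L1norm f = (∫⁻ t in Ioi 0, ‖f t‖ₑ).toReal := by
  simp_rw [L1norm, ← Real.norm_eq_abs]
  exact integral_norm_eq_lintegral_enorm hf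

theorem L1norm_nonneg (f : ℝ → ℝ) : 0 ≤ L1norm f :=
  integral_nonneg fun _ => abs_nonneg _

section MatrixConvolutionPower

variable {ι : Type*} [Fintype ι] {φ : Matrix ι ι (ℝ → ℝ)}

theorem measurable_mconvPow_apply (hφ : ∀ i j, Measurable (φ i j)) (n : ℕ) :
    ∀ i j, Measurable (mconvPow φ n i j) := by
  induction n with
  | zero => exact hφ
  | succ n ih => exact measurable_mconv_apply hφ ih

variable [DecidableEq ι] {β : Matrix ι ι ℝ}

theorem lintegral_Ioi_enorm_mconvPow_apply_le (hφ : ∀ i j, Measurable (φ i j))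
    (hβ : ∀ i j, 0 ≤ β i j) (hφβ : ∀ i j, ∫⁻ t in Ioi 0, ‖φ i j t‖ₑ ≤ ENNReal.ofReal (β i j))
    (n : ℕ) : ∀ i j, ∫⁻ t in Ioi 0, ‖mconvPow φ n i j t‖ₑ ≤ ENNReal.ofReal ((β ^ (n + 1)) i j) := by
  induction n with
  | zero => simpa only [mconvPow, zero_add, pow_one] using hφβ
  | succ n ih =>
    intro i j
    calc ∫⁻ t in Ioi 0, ‖mconv φ (mconvPow φ n) i j t‖ₑ
        ≤ ∑ k, (∫⁻ t in Ioi 0, ‖φ i k t‖ₑ) * ∫⁻ t in Ioi 0, ‖mconvPow φ n k j t‖ₑ :=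
          lintegral_Ioi_enorm_mconv_apply_le hφ (measurable_mconvPow_apply hφ n) i j
      _ ≤ ∑ k, ENNReal.ofReal (β i k) * ENNReal.ofReal ((β ^ (n + 1)) k j) := by
          gcongr with k
          exacts [hφβ i k, ih k j]
      _ = ENNReal.ofReal ((β ^ (n + 2)) i j) := by
          rw [pow_succ' β (n + 1), mul_apply, ENNReal.ofReal_sum_of_nonneg fun k _ =>
            mul_nonneg (hβ i k) (pow_apply_nonneg hβ _ k j)]
          simp_rw [ENNReal.ofReal_mul (hβ i _)]

theorem L1norm_mconvPow_apply_le (hφ : ∀ i j, Measurable (φ i j)) (hβ : ∀ i j, 0 ≤ β i j)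
    (hφβ : ∀ i j, ∫⁻ t in Ioi 0, ‖φ i j t‖ₑ ≤ ENNReal.ofReal (β i j)) (n : ℕ) (i j : ι) :
    L1norm (mconvPow φ n i j) ≤ (β ^ (n + 1)) i j := by
  rw [L1norm_eq_toReal_lintegral_enorm (measurable_mconvPow_apply hφ n i j).aestronglyMeasurable]
  exact ENNReal.toReal_le_of_le_ofReal (pow_apply_nonneg hβ _ i j)
    (lintegral_Ioi_enorm_mconvPow_apply_le hφ hβ hφβ n i j)

end MatrixConvolutionPower

theorem summable_norm_pow_of_spectralRadius_lt_one {A : Type*} [NormedRing A] [NormedAlgebra ℂ A]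
    [CompleteSpace A] {a : A} (ha : spectralRadius ℂ a < 1) : Summable (‖a ^ ·‖) := by
  obtain ⟨r, har, hr1⟩ := ENNReal.lt_iff_exists_nnreal_btwn.1 ha
  have hgelfand := spectrum.pow_nnnorm_pow_one_div_tendsto_nhds_spectralRadius a
  have hpow : ∀ᶠ n : ℕ in atTop, ‖‖a ^ n‖‖ ≤ r ^ n := by
    filter_upwards [hgelfand.eventually_lt_const har, eventually_gt_atTop 0] with n hn hn0
    rw [one_div, ENNReal.rpow_inv_lt_iff (by positivity), ENNReal.rpow_natCast] at hn
    rw [norm_norm]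
    exact_mod_cast hn.le
  exact .of_norm_bounded_eventually_nat
    (NNReal.summable_coe.2 (NNReal.summable_geometric (by exact_mod_cast hr1))) hpow

section Neumann

variable {ι : Type*} [Fintype ι] [DecidableEq ι]

-- Gelfand's formula needs some Banach-algebra norm on complex matrices; which one is immaterial.
attribute [local instance] Matrix.linftyOpNormedRing Matrix.linftyOpNormedAlgebra

theorem spectralRadius_map_ofReal_le_specRad (A : Matrix ι ι ℝ) :
    spectralRadius ℂ (A.map Complex.ofReal) ≤ ENNReal.ofReal (specRad A) := by
  refine iSup₂_le fun z hz => ?_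
  have hz : ‖z‖ ≤ specRad A :=
    le_csSup ((spectrum.isCompact _).image continuous_norm).bddAbove (mem_image_of_mem _ hz)
  simpa [← ENNReal.ofReal_coe_nnreal] using ENNReal.ofReal_le_ofReal hz

theorem summable_pow_of_specRad_lt_one {A : Matrix ι ι ℝ} (hA : specRad A < 1) :
    Summable (A ^ ·) := by
  have hB : spectralRadius ℂ (A.map Complex.ofReal) < 1 :=
    (spectralRadius_map_ofReal_le_specRad A).trans_lt (by rwa [ENNReal.ofReal_lt_one])
  have hre (n : ℕ) : ((A.map Complex.ofReal) ^ n).map Complex.re = A ^ n := by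
    rw [show A.map Complex.ofReal = A.map Complex.ofRealHom from rfl, ← Matrix.map_pow,
      Matrix.map_map]
    rfl
  simpa only [comp_def, AddMonoidHom.mapMatrix_apply, Complex.coe_reAddGroupHom, hre] using
    (summable_norm_pow_of_spectralRadius_lt_one hB).of_norm.map
      Complex.reAddGroupHom.mapMatrix (continuous_id.matrix_map Complex.continuous_re)

theorem hasSum_pow_of_specRad_lt_one {A : Matrix ι ι ℝ} (hA : specRad A < 1) :
    HasSum (A ^ ·) (1 - A)⁻¹ := by
  have hS := summable_pow_of_specRad_lt_one hA
  rw [inv_eq_right_inv hS.one_sub_mul_tsum_pow]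
  exact hS.hasSum

end Neumann

section BlockPowers

variable {R m n : Type*} [Fintype m] [DecidableEq m] [Fintype n] [DecidableEq n]

theorem fromBlocks_zero_pow_succ [Semiring R] (A : Matrix m m R) (Q : Matrix n m R) (k : ℕ) :
    fromBlocks A 0 Q (0 : Matrix n n R) ^ (k + 1) = fromBlocks (A ^ (k + 1)) 0 (Q * A ^ k) 0 := by
  induction k with
  | zero => simp
  | succ k ih => rw [pow_succ, ih, fromBlocks_multiply]; simp [pow_succ, Matrix.mul_assoc]

theorem hasSum_fromBlocks_zero_pow_succ [Ring R] [TopologicalSpace R] [IsTopologicalRing R]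
    {A S : Matrix m m R} (Q : Matrix n m R) (hA : HasSum (A ^ ·) S) :
    HasSum (fun k => fromBlocks A 0 Q (0 : Matrix n n R) ^ (k + 1))
      (fromBlocks (S - 1) 0 (Q * S) 0) := by
  have h₁₁ : HasSum (fun k => A ^ (k + 1)) (S - 1) := by
    simpa using (hasSum_nat_add_iff' 1).2 hA
  have h₂₁ : HasSum (fun k => Q * A ^ k) (Q * S) :=
    hA.map (mulLeftLinearMap m ℕ Q) (continuous_const.matrix_mul continuous_id)
  simp_rw [fromBlocks_zero_pow_succ]
  refine Pi.hasSum.2 fun i => Pi.hasSum.2 fun j => ?_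
  rcases i with i | i <;> rcases j with j | j
  · exact Pi.hasSum.1 (Pi.hasSum.1 h₁₁ i) j
  · exact hasSum_zero
  · exact Pi.hasSum.1 (Pi.hasSum.1 h₂₁ i) j
  · exact hasSum_zero

end BlockPowers

theorem lintegral_Ioi_enorm_const_mul {c : ℝ} (hc : 0 ≤ c) {f : ℝ → ℝ} (hf0 : ∀ t, 0 ≤ f t)
    (hfi : IntegrableOn f (Ioi 0)) (hf1 : ∫ t in Ioi 0, f t = 1) :
    ∫⁻ t in Ioi 0, ‖c * f t‖ₑ = ENNReal.ofReal c := by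
  simp_rw [enorm_mul, Real.enorm_of_nonneg hc]
  rw [lintegral_const_mul' _ _ ENNReal.ofReal_ne_top,
    ← ofReal_integral_norm_eq_lintegral_enorm hfi]
  simp_rw [Real.norm_of_nonneg (hf0 _), hf1, ENNReal.ofReal_one, mul_one]

theorem stmt8 (e m : ℕ) (α : Matrix (Fin e ⊕ Fin m) (Fin e ⊕ Fin m) ℝ)
    (f : (Fin e ⊕ Fin m) → (Fin e ⊕ Fin m) → ℝ → ℝ)
    (hα : ∀ i j, 0 ≤ α i j)
    (hf0 : ∀ i j t, 0 ≤ f i j t)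
    (hfm : ∀ i j, Measurable (f i j))
    (hfi : ∀ i j, IntegrableOn (f i j) (Set.Ioi 0))
    (hf1 : ∀ i j, ∫ t in Set.Ioi (0:ℝ), f i j t = 1)
    (φE : Matrix (Fin e ⊕ Fin m) (Fin e ⊕ Fin m) (ℝ → ℝ))
    (hφEl : ∀ i k, φE i (Sum.inl k) = fun t => α i (Sum.inl k) * f i (Sum.inl k) t)
    (hφEr : ∀ i k, φE i (Sum.inr k) = 0)
    (αEE : Matrix (Fin e) (Fin e) ℝ) (hEE : αEE = Matrix.of fun i j => α (Sum.inl i) (Sum.inl j))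
    (αQ : Matrix (Fin m) (Fin e) ℝ) (hQ : αQ = Matrix.of fun i j => α (Sum.inr i) (Sum.inl j))
    (hspec : specRad αEE < 1) :
    ∀ i j, ∑' n : ℕ, L1norm (mconvPow φE n i j) ≤
      Matrix.fromBlocks ((1 - αEE)⁻¹ - 1) (0 : Matrix (Fin e) (Fin m) ℝ)
        (αQ * (1 - αEE)⁻¹) 0 i j := by
  set β := fromBlocks αEE 0 αQ (0 : Matrix (Fin m) (Fin m) ℝ)
  have hβl : ∀ i k, β i (Sum.inl k) = α i (Sum.inl k) := by
    rintro (i | i) k <;> simp [β, hEE, hQ]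
  have hβ0 : ∀ i j, 0 ≤ β i j := by
    rintro i (j | j)
    · exact (hβl i j).symm ▸ hα _ _
    · rcases i with i | i <;> simp [β]
  have hφm : ∀ i k, Measurable (φE i k) := by
    rintro i (k | k)
    · simpa only [hφEl] using (hfm _ _).const_mul _
    · rw [hφEr]
      exact measurable_zero
  have hφβ : ∀ i k, ∫⁻ t in Ioi 0, ‖φE i k t‖ₑ ≤ ENNReal.ofReal (β i k) := by
    rintro i (k | k)
    · rw [hφEl, hβl, lintegral_Ioi_enorm_const_mul (hα _ _) (hf0 _ _) (hfi _ _) (hf1 _ _)]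
    · simp [hφEr]
  intro i j
  have hΩ := Pi.hasSum.1 (Pi.hasSum.1
    (hasSum_fromBlocks_zero_pow_succ αQ (hasSum_pow_of_specRad_lt_one hspec)) i) j
  refine Real.tsum_le_of_sum_range_le (fun n => L1norm_nonneg _) fun N => ?_
  exact (Finset.sum_le_sum fun n _ => L1norm_mconvPow_apply_le hφm hβ0 hφβ n i j).trans
    (sum_le_hasSum _ (fun n _ => pow_apply_nonneg hβ0 _ i j) hΩ)
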